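/- Define y_γ by ((1-γ)/γ)·y_γ = s_γ where R(s_γ) = 1-γ and R(s) = s·e^{s²/2}∫_s^∞ e^{-y²/2}dy. Then for all 0 < γ ≤ 1/30, |y_γ - γ^{1/2}/(1-γ)| ≤ 4·γ^{3/2}. -/

import Mathlib

/-!
The Mills ratio `m(s) = e^{s²/2} ∫_s^∞ e^{-y²/2} dy` lies between consecutive convergents of its
continued fraction, `s / (s² + 1) ≤ m(s) ≤ (s² + 2) / (s (s² + 3))`, which follows by comparing
`∫_s^∞ e^{-y²/2}` with the derivative of `-e^{-y²/2} r(y)` for each of these rational `r`.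
Hence `R(s_γ) = 1 - γ` pins down `γ s_γ²` between `1 - 3γ` and `1 - γ`, so `√γ s_γ = 1 + O(γ)`,
and `y_γ - √γ/(1-γ) = √γ (√γ s_γ - 1)/(1-γ)`.
-/

open Real MeasureTheory

/-- `R(s) = s·e^{s²/2}·∫_s^∞ e^{-y²/2} dy`, i.e. `s` times the standard normal Mills' ratio. -/
noncomputable def millsR (s : ℝ) : ℝ :=
  s * Real.exp (s ^ 2 / 2) * ∫ y in Set.Ioi s, Real.exp (-y ^ 2 / 2)

open Set Filter Topology

section ImproperIntegral

variable {f g g' : ℝ → ℝ} {a m : ℝ}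

theorem integral_Ioi_le_sub_of_hasDerivAt_of_le (hderiv : ∀ x ∈ Ici a, HasDerivAt g (g' x) x)
    (hf : IntegrableOn f (Ioi a)) (hfg : ∀ x ∈ Ioi a, f x ≤ g' x)
    (hg : Tendsto g atTop (𝓝 m)) : ∫ x in Ioi a, f x ≤ m - g a := by
  refine le_of_tendsto_of_tendsto (intervalIntegral_tendsto_integral_Ioi a hf tendsto_id)
    (hg.sub_const (g a)) ?_
  filter_upwards [eventually_ge_atTop a] with b hab
  exact intervalIntegral.integral_le_sub_of_hasDeriv_right_of_le hab
    (fun x hx => (hderiv x hx.1).continuousAt.continuousWithinAt)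
    (fun x hx => (hderiv x hx.1.le).hasDerivWithinAt)
    ((integrableOn_Icc_iff_integrableOn_Ioc).mpr (hf.mono_set Ioc_subset_Ioi_self))
    (fun x hx => hfg x hx.1)

theorem sub_le_integral_Ioi_of_hasDerivAt_of_le (hderiv : ∀ x ∈ Ici a, HasDerivAt g (g' x) x)
    (hf : IntegrableOn f (Ioi a)) (hgf : ∀ x ∈ Ioi a, g' x ≤ f x)
    (hg : Tendsto g atTop (𝓝 m)) : m - g a ≤ ∫ x in Ioi a, f x := by
  refine le_of_tendsto_of_tendsto (hg.sub_const (g a))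
    (intervalIntegral_tendsto_integral_Ioi a hf tendsto_id) ?_
  filter_upwards [eventually_ge_atTop a] with b hab
  exact intervalIntegral.sub_le_integral_of_hasDeriv_right_of_le hab
    (fun x hx => (hderiv x hx.1).continuousAt.continuousWithinAt)
    (fun x hx => (hderiv x hx.1.le).hasDerivWithinAt)
    ((integrableOn_Icc_iff_integrableOn_Ioc).mpr (hf.mono_set Ioc_subset_Ioi_self))
    (fun x hx => hgf x hx.1)

end ImproperIntegral

theorem tendsto_zero_of_nonneg_of_le_inv {r : ℝ → ℝ} (h0 : ∀ x > 0, 0 ≤ r x)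
    (h1 : ∀ x > 0, r x ≤ x⁻¹) : Tendsto r atTop (𝓝 0) :=
  tendsto_of_tendsto_of_tendsto_of_le_of_le' tendsto_const_nhds tendsto_inv_atTop_zero
    (eventually_gt_atTop 0 |>.mono h0) (eventually_gt_atTop 0 |>.mono h1)

section GaussianTail

theorem integrable_exp_neg_sq_div_two : Integrable fun x : ℝ => exp (-x ^ 2 / 2) := by
  convert integrable_exp_neg_mul_sq (b := 1 / 2) (by norm_num) using 2 with x
  ring_nf

theorem tendsto_exp_neg_sq_div_two_atTop :
    Tendsto (fun x : ℝ => exp (-x ^ 2 / 2)) atTop (𝓝 0) := by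
  have h : Tendsto (fun x : ℝ => x ^ 2 / 2) atTop atTop :=
    (tendsto_pow_atTop two_ne_zero).atTop_div_const two_pos
  simpa only [Function.comp_def, neg_div] using tendsto_exp_neg_atTop_nhds_zero.comp h

theorem hasDerivAt_neg_exp_neg_sq_div_two_mul {r : ℝ → ℝ} {r' x : ℝ}
    (hr : HasDerivAt r r' x) :
    HasDerivAt (fun y => -(exp (-y ^ 2 / 2) * r y)) (exp (-x ^ 2 / 2) * (x * r x - r')) x := by
  have hq : HasDerivAt (fun y : ℝ => -y ^ 2 / 2) (-x) x :=
    ((hasDerivAt_pow 2 x).neg.div_const 2).congr_deriv (by ring)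
  exact ((HasDerivAt.exp hq).mul hr).neg.congr_deriv (by ring)

variable {r r' : ℝ → ℝ} {s : ℝ}

theorem integral_Ioi_exp_neg_sq_div_two_le_mul (hr : ∀ x ∈ Ici s, HasDerivAt r (r' x) x)
    (hlim : Tendsto r atTop (𝓝 0)) (h : ∀ x ∈ Ioi s, 1 ≤ x * r x - r' x) :
    ∫ x in Ioi s, exp (-x ^ 2 / 2) ≤ exp (-s ^ 2 / 2) * r s := by
  have := integral_Ioi_le_sub_of_hasDerivAt_of_le
    (fun x hx => hasDerivAt_neg_exp_neg_sq_div_two_mul (hr x hx))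
    integrable_exp_neg_sq_div_two.integrableOn
    (fun x hx => le_mul_of_one_le_right (exp_pos _).le (h x hx))
    (by simpa using (tendsto_exp_neg_sq_div_two_atTop.mul hlim).neg)
  simpa using this

theorem mul_le_integral_Ioi_exp_neg_sq_div_two (hr : ∀ x ∈ Ici s, HasDerivAt r (r' x) x)
    (hlim : Tendsto r atTop (𝓝 0)) (h : ∀ x ∈ Ioi s, x * r x - r' x ≤ 1) :
    exp (-s ^ 2 / 2) * r s ≤ ∫ x in Ioi s, exp (-x ^ 2 / 2) := by
  have := sub_le_integral_Ioi_of_hasDerivAt_of_le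
    (fun x hx => hasDerivAt_neg_exp_neg_sq_div_two_mul (hr x hx))
    integrable_exp_neg_sq_div_two.integrableOn
    (fun x hx => mul_le_of_le_one_right (exp_pos _).le (h x hx))
    (by simpa using (tendsto_exp_neg_sq_div_two_atTop.mul hlim).neg)
  simpa using this

theorem mul_exp_sq_div_two_mul_exp_neg (s c : ℝ) :
    s * exp (s ^ 2 / 2) * (exp (-s ^ 2 / 2) * c) = s * c := by
  have h : exp (s ^ 2 / 2) * exp (-s ^ 2 / 2) = 1 := by rw [← exp_add]; simp [neg_div]
  linear_combination s * c * h

theorem le_millsR {s : ℝ} (hs : 0 ≤ s) : s ^ 2 / (s ^ 2 + 1) ≤ millsR s := by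
  have hr (x : ℝ) : HasDerivAt (fun x => x / (x ^ 2 + 1))
      ((1 * (x ^ 2 + 1) - x * (2 * x)) / (x ^ 2 + 1) ^ 2) x :=
    (hasDerivAt_id' (x := x)).div (((hasDerivAt_pow 2 x).add_const 1).congr_deriv (by ring))
      (by positivity)
  have hQ := mul_le_integral_Ioi_exp_neg_sq_div_two (s := s) (fun x _ => hr x)
    (tendsto_zero_of_nonneg_of_le_inv (fun x hx => by positivity) fun x hx => by
      rw [div_le_iff₀ (by positivity)]
      field_simp
      nlinarith)
    fun x _ => by
      field_simp
      nlinarith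
  calc s ^ 2 / (s ^ 2 + 1) = s * exp (s ^ 2 / 2) * (exp (-s ^ 2 / 2) * (s / (s ^ 2 + 1))) := by
        rw [mul_exp_sq_div_two_mul_exp_neg]; ring
    _ ≤ millsR s := mul_le_mul_of_nonneg_left hQ (by positivity)

theorem millsR_le {s : ℝ} (hs : 0 < s) : millsR s ≤ (s ^ 2 + 2) / (s ^ 2 + 3) := by
  have hr (x : ℝ) (hx : 0 < x) : HasDerivAt (fun x => (x ^ 2 + 2) / (x * (x ^ 2 + 3)))
      ((2 * x * (x * (x ^ 2 + 3)) - (x ^ 2 + 2) * (3 * x ^ 2 + 3)) / (x * (x ^ 2 + 3)) ^ 2) x :=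
    (((hasDerivAt_pow 2 x).add_const 2).congr_deriv (by ring)).div
      (((hasDerivAt_id' (x := x)).mul ((hasDerivAt_pow 2 x).add_const 3)).congr_deriv (by ring))
      (by positivity)
  have hQ := integral_Ioi_exp_neg_sq_div_two_le_mul (s := s) (fun x hx => hr x (hs.trans_le hx))
    (tendsto_zero_of_nonneg_of_le_inv (fun x hx => by positivity) fun x hx => by
      rw [div_le_iff₀ (by positivity)]
      field_simp
      nlinarith)
    fun x hx => by
      have : 0 < x := hs.trans hx
      field_simp
      nlinarith
  calc millsR s ≤ s * exp (s ^ 2 / 2) *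
        (exp (-s ^ 2 / 2) * ((s ^ 2 + 2) / (s * (s ^ 2 + 3)))) :=
        mul_le_mul_of_nonneg_left hQ (by positivity)
    _ = (s ^ 2 + 2) / (s ^ 2 + 3) := by
        rw [mul_exp_sq_div_two_mul_exp_neg]; field_simp

end GaussianTail

theorem abs_sqrt_mul_sub_one_le {γ s : ℝ} (hs : 0 ≤ s) (hlow : γ * (s ^ 2 + 1) ≤ 1)
    (hup : 1 ≤ γ * (s ^ 2 + 3)) : |√γ * s - 1| ≤ 3 * γ := by
  have hγ : 0 ≤ γ := by nlinarith
  have hu : 0 ≤ √γ * s := by positivity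
  have hu2 : (√γ * s) ^ 2 = γ * s ^ 2 := by rw [mul_pow, sq_sqrt hγ]
  have hu1 : √γ * s ≤ 1 := by nlinarith
  rw [abs_sub_comm, abs_of_nonneg (by linarith)]
  nlinarith

/-- With `y_γ = γ·s_γ/(1-γ)` where `R(s_γ) = 1-γ`, `s_γ > 0`: for `0 < γ ≤ 1/30`,
`|y_γ - γ^{1/2}/(1-γ)| ≤ 4 γ^{3/2}`. -/
theorem stmt_11 (γ s y : ℝ) (hγ0 : 0 < γ) (hγ : γ ≤ 1 / 30) (hs : 0 < s)
    (hR : millsR s = 1 - γ) (hy : ((1 - γ) / γ) * y = s) :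
    |y - γ ^ ((1 : ℝ) / 2) / (1 - γ)| ≤ 4 * γ ^ ((3 : ℝ) / 2) := by
  have hγ1 : 0 < 1 - γ := by linarith
  have hlow : γ * (s ^ 2 + 1) ≤ 1 := by
    have h := hR ▸ le_millsR hs.le
    rw [div_le_iff₀ (by positivity)] at h
    nlinarith
  have hup : 1 ≤ γ * (s ^ 2 + 3) := by
    have h := hR ▸ millsR_le hs
    rw [le_div_iff₀ (by positivity)] at h
    nlinarith
  have hys : y = γ * s / (1 - γ) := by
    field_simp at hy ⊢
    linarith
  rw [← sqrt_eq_rpow, show (3 : ℝ) / 2 = 1 + 1 / 2 by norm_num, rpow_add hγ0, rpow_one,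
    ← sqrt_eq_rpow, hys, ← sub_div, abs_div, abs_of_pos hγ1, div_le_iff₀ hγ1]
  have hfactor : γ * s - √γ = √γ * (√γ * s - 1) := by
    rw [mul_sub, ← mul_assoc, mul_self_sqrt hγ0.le, mul_one]
  calc |γ * s - √γ| = √γ * |√γ * s - 1| := by
        rw [hfactor, abs_mul, abs_of_nonneg (sqrt_nonneg γ)]
    _ ≤ √γ * (3 * γ) := by gcongr; exact abs_sqrt_mul_sub_one_le hs.le hlow hup
    _ ≤ 4 * (γ * √γ) * (1 - γ) := by
        nlinarith [mul_nonneg (mul_nonneg hγ0.le (sqrt_nonneg γ)) (by linarith : 0 ≤ 1 - 4 * γ)]
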